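/- Let n ≥ k, let B, B* ∈ ℝ^{k×d} have orthonormal rows with ‖B − B*‖₂ ≤ ε, let v* ∈ ℝ^k, and let X ∈ ℝ^{n×d}. Suppose the k×k matrix B Xᵀ X Bᵀ is invertible, and define the linear-probing solution v_lp = (B Xᵀ X Bᵀ)⁻¹ B Xᵀ X B*ᵀ v*. Let s_max = ‖X‖₂ and s_min = inf{‖X Bᵀ u‖₂ : u ∈ ℝ^k, ‖u‖₂ = 1} (so s_min > 0). Then ‖B*ᵀ v* − Bᵀ v_lp‖₂ ≤ ε ‖v*‖₂ + (s_max² / s_min²) · ε · ‖v*‖₂. -/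

import Mathlib

/-!
With `z = (B - B*)ᵀ v*`, `P = B Xᵀ X` and `G = X Bᵀ` (so that `B Xᵀ X Bᵀ = Gᵀ G`), the error vector
is `Bᵀ (Gᵀ G)⁻¹ P z - z`. Here `‖z‖ ≤ ε ‖v*‖`; `B` and `Bᵀ` are contractions because `B Bᵀ = 1`, so
`‖P z‖ ≤ s_max² ‖z‖`; and `‖(Gᵀ G)⁻¹ w‖ ≤ ‖w‖ / s_min²` because
`s_min² ‖v‖² ≤ ‖G v‖² = ⟨Gᵀ G v, v⟩ ≤ ‖Gᵀ G v‖ ‖v‖`. Finally `s_min > 0` by compactness of the unit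
sphere, `G` being injective since `Gᵀ G` is invertible.
-/

open Matrix

noncomputable section

/-- View a plain vector as an element of Euclidean space. -/
def toE {n : ℕ} (x : Fin n → ℝ) : EuclideanSpace ℝ (Fin n) := WithLp.toLp 2 x

/-- Euclidean (ℓ2) norm of a vector. -/
def enorm2 {n : ℕ} (x : Fin n → ℝ) : ℝ := ‖toE x‖

/-- Spectral (ℓ2 operator) norm of a matrix. -/
def specNorm {m n : ℕ} (M : Matrix (Fin m) (Fin n) ℝ) : ℝ :=
  sSup {c | ∃ x : Fin n → ℝ, enorm2 x = 1 ∧ c = enorm2 (M.mulVec x)}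

open scoped Matrix.Norms.L2Operator

namespace ContinuousLinearMap

variable {E F : Type*} [NormedAddCommGroup E] [NormedSpace ℝ E] [NormedAddCommGroup F]
  [NormedSpace ℝ F]

lemma sInf_sphere_mul_norm_le (f : E →L[ℝ] F) (x : E) :
    sInf ((fun u => ‖f u‖) '' Metric.sphere 0 1) * ‖x‖ ≤ ‖f x‖ := by
  rcases eq_or_ne x 0 with rfl | hx
  · simp
  have hx' : 0 < ‖x‖ := norm_pos_iff.mpr hx
  have hmem : ‖f (‖x‖⁻¹ • x)‖ ∈ (fun u => ‖f u‖) '' Metric.sphere 0 1 :=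
    ⟨_, by simp [norm_smul, hx'.ne'], rfl⟩
  have hle := csInf_le ⟨0, by rintro _ ⟨u, -, rfl⟩; positivity⟩ hmem
  rw [map_smul, norm_smul, norm_inv, norm_norm] at hle
  rwa [le_inv_mul_iff₀ hx', mul_comm] at hle

lemma sInf_sphere_pos [FiniteDimensional ℝ E] [Nontrivial E] {f : E →L[ℝ] F}
    (hf : Function.Injective f) : 0 < sInf ((fun u => ‖f u‖) '' Metric.sphere 0 1) := by
  have hne : (Metric.sphere (0 : E) 1).Nonempty := NormedSpace.sphere_nonempty.mpr zero_le_one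
  obtain ⟨u₀, hu₀, hmin⟩ :=
    (isCompact_sphere (0 : E) 1).exists_isMinOn hne (f.continuous.norm.continuousOn)
  have hu₀0 : u₀ ≠ 0 := ne_zero_of_mem_unit_sphere ⟨u₀, hu₀⟩
  have hpos : 0 < ‖f u₀‖ := norm_pos_iff.mpr ((map_ne_zero_iff f hf).mpr hu₀0)
  refine hpos.trans_le (le_csInf (hne.image _) ?_)
  rintro _ ⟨u, hu, rfl⟩
  exact hmin hu

end ContinuousLinearMap

namespace Matrix

variable {m n p : Type*} [Fintype m] [Fintype n] [Fintype p]

lemma l2_opNorm_transpose [DecidableEq m] [DecidableEq n] (A : Matrix m n ℝ) : ‖Aᵀ‖ = ‖A‖ := by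
  rw [← conjTranspose_eq_transpose_of_trivial, l2_opNorm_conjTranspose]

lemma l2_opNorm_transpose_le_one [DecidableEq m] {B : Matrix m n ℝ} (hB : B * Bᵀ = 1) :
    ‖Bᵀ‖ ≤ 1 := by
  have h := l2_opNorm_conjTranspose_mul_self Bᵀ
  rw [conjTranspose_eq_transpose_of_trivial, transpose_transpose, hB] at h
  have hone : ‖(1 : Matrix m m ℝ)‖ ≤ 1 := by
    rw [l2_opNorm_def, LinearEquiv.trans_apply, toLpLin_one]
    exact ContinuousLinearMap.norm_id_le
  nlinarith [norm_nonneg Bᵀ]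

lemma l2_opNorm_le_one [DecidableEq m] [DecidableEq n] {B : Matrix m n ℝ} (hB : B * Bᵀ = 1) :
    ‖B‖ ≤ 1 :=
  l2_opNorm_transpose B ▸ l2_opNorm_transpose_le_one hB

lemma l2_opNorm_mul_transpose_mul_le [DecidableEq m] [DecidableEq n] [DecidableEq p]
    {B : Matrix m n ℝ} (hB : B * Bᵀ = 1) (X : Matrix p n ℝ) :
    ‖B * Xᵀ * X‖ ≤ ‖X‖ ^ 2 :=
  calc ‖B * Xᵀ * X‖ ≤ ‖B‖ * ‖Xᵀ‖ * ‖X‖ := by grw [l2_opNorm_mul, l2_opNorm_mul]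
    _ ≤ ‖X‖ ^ 2 := by
      rw [l2_opNorm_transpose]
      nlinarith [l2_opNorm_le_one hB, norm_nonneg X, norm_nonneg B]

lemma transpose_mulVec_sub_linearProbe_eq {k d : Type*} [Fintype k] [Fintype d] [DecidableEq k]
    (P B Bstar : Matrix k d ℝ) (hP : IsUnit (P * Bᵀ)) (v : k → ℝ) :
    Bstarᵀ *ᵥ v - Bᵀ *ᵥ ((P * Bᵀ)⁻¹ *ᵥ ((P * Bstarᵀ) *ᵥ v)) =
      Bᵀ *ᵥ ((P * Bᵀ)⁻¹ *ᵥ (P *ᵥ ((B - Bstar)ᵀ *ᵥ v))) - (B - Bstar)ᵀ *ᵥ v := by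
  have h : (P * Bᵀ)⁻¹ *ᵥ (P *ᵥ ((B - Bstar)ᵀ *ᵥ v)) =
      v - (P * Bᵀ)⁻¹ *ᵥ ((P * Bstarᵀ) *ᵥ v) := by
    rw [transpose_sub, sub_mulVec, mulVec_sub, mulVec_mulVec v P Bᵀ, mulVec_mulVec v P Bstarᵀ,
      mulVec_sub, mulVec_mulVec v _ (P * Bᵀ),
      nonsing_inv_mul _ ((isUnit_iff_isUnit_det _).mp hP), one_mulVec]
  rw [h, mulVec_sub, transpose_sub, sub_mulVec]
  abel

end Matrix

section EuclideanNorms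

variable {m n : ℕ}

lemma enorm2_sub_le (x y : Fin m → ℝ) : enorm2 (x - y) ≤ enorm2 x + enorm2 y :=
  norm_sub_le (toE x) (toE y)

lemma inner_toE (x y : Fin m → ℝ) : inner ℝ (toE x) (toE y) = x ⬝ᵥ y := by
  simp [toE, PiLp.inner_apply, dotProduct, mul_comm]

lemma enorm2_sq (x : Fin m → ℝ) : enorm2 x ^ 2 = x ⬝ᵥ x := by
  rw [← inner_toE, real_inner_self_eq_norm_sq]
  rfl

lemma dotProduct_le_enorm2_mul (x y : Fin m → ℝ) : x ⬝ᵥ y ≤ enorm2 x * enorm2 y := by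
  rw [← inner_toE]
  exact real_inner_le_norm _ _

lemma enorm2_mulVec_le (M : Matrix (Fin m) (Fin n) ℝ) (x : Fin n → ℝ) :
    enorm2 (M *ᵥ x) ≤ ‖M‖ * enorm2 x :=
  M.l2_opNorm_mulVec (toE x)

lemma enorm2_transpose_mulVec_le {B : Matrix (Fin m) (Fin n) ℝ} (hB : B * Bᵀ = 1)
    (u : Fin m → ℝ) : enorm2 (Bᵀ *ᵥ u) ≤ enorm2 u :=
  (enorm2_mulVec_le _ _).trans
    (mul_le_of_le_one_left (norm_nonneg _) (Matrix.l2_opNorm_transpose_le_one hB))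

lemma setOf_enorm2_mulVec_eq_image (M : Matrix (Fin m) (Fin n) ℝ) :
    {c | ∃ x : Fin n → ℝ, enorm2 x = 1 ∧ c = enorm2 (M *ᵥ x)} =
      (fun u => ‖(Matrix.toEuclideanLin.trans LinearMap.toContinuousLinearMap) M u‖) ''
        Metric.sphere 0 1 := by
  ext c
  constructor
  · rintro ⟨x, hx, rfl⟩
    exact ⟨toE x, by simpa [enorm2] using hx, rfl⟩
  · rintro ⟨u, hu, rfl⟩
    exact ⟨u.ofLp, by simpa [enorm2, toE] using hu, rfl⟩

lemma specNorm_eq_norm (M : Matrix (Fin m) (Fin n) ℝ) : specNorm M = ‖M‖ := by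
  rw [specNorm, setOf_enorm2_mulVec_eq_image, ContinuousLinearMap.sSup_sphere_eq_norm]
  rfl

def sMin (G : Matrix (Fin m) (Fin n) ℝ) : ℝ :=
  sInf {c | ∃ u : Fin n → ℝ, enorm2 u = 1 ∧ c = enorm2 (G *ᵥ u)}

lemma sMin_mul_enorm2_le (G : Matrix (Fin m) (Fin n) ℝ) (u : Fin n → ℝ) :
    sMin G * enorm2 u ≤ enorm2 (G *ᵥ u) := by
  rw [sMin, setOf_enorm2_mulVec_eq_image]
  exact ContinuousLinearMap.sInf_sphere_mul_norm_le _ (toE u)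

lemma sMin_pos {G : Matrix (Fin m) (Fin n) ℝ} (hn : 0 < n) (hG : Function.Injective G.mulVec) :
    0 < sMin G := by
  have : Nontrivial (EuclideanSpace ℝ (Fin n)) := by
    have : Nonempty (Fin n) := ⟨⟨0, hn⟩⟩
    infer_instance
  rw [sMin, setOf_enorm2_mulVec_eq_image]
  exact ContinuousLinearMap.sInf_sphere_pos fun u v huv =>
    WithLp.ofLp_injective 2 (hG (congrArg WithLp.ofLp huv))

lemma sMin_nonneg (G : Matrix (Fin m) (Fin n) ℝ) : 0 ≤ sMin G :=
  Real.sInf_nonneg fun _ ⟨_, _, hc⟩ => hc ▸ norm_nonneg _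

lemma sMin_sq_mul_enorm2_le_gram (G : Matrix (Fin m) (Fin n) ℝ) (v : Fin n → ℝ) :
    sMin G ^ 2 * enorm2 v ≤ enorm2 ((Gᵀ * G) *ᵥ v) := by
  have hGv := sMin_mul_enorm2_le G v
  have hsq : enorm2 (G *ᵥ v) ^ 2 = (Gᵀ * G) *ᵥ v ⬝ᵥ v := by
    rw [enorm2_sq, Matrix.dotProduct_mulVec, ← Matrix.mulVec_transpose, ← Matrix.mulVec_mulVec]
  have hCS := dotProduct_le_enorm2_mul ((Gᵀ * G) *ᵥ v) v
  have hs := sMin_nonneg G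
  have hv : 0 ≤ enorm2 v := norm_nonneg _
  rcases hv.eq_or_lt with h0 | hpos
  · rw [← h0, mul_zero]
    exact norm_nonneg _
  · nlinarith [mul_le_mul hGv hGv (by positivity) (norm_nonneg _)]

lemma enorm2_gram_inv_mulVec_le {G : Matrix (Fin m) (Fin n) ℝ} (hG : IsUnit (Gᵀ * G))
    (w : Fin n → ℝ) : enorm2 ((Gᵀ * G)⁻¹ *ᵥ w) ≤ enorm2 w / sMin G ^ 2 := by
  rcases Nat.eq_zero_or_pos n with rfl | hn
  · rw [Subsingleton.elim ((Gᵀ * G)⁻¹ *ᵥ w) 0, enorm2, toE, WithLp.toLp_zero, norm_zero]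
    exact div_nonneg (norm_nonneg _) (sq_nonneg _)
  have hinj : Function.Injective G.mulVec := by
    refine Function.Injective.of_comp (f := Gᵀ.mulVec) ?_
    simpa only [Function.comp_def, Matrix.mulVec_mulVec] using
      Matrix.mulVec_injective_iff_isUnit.mpr hG
  have hs : 0 < sMin G ^ 2 := pow_pos (sMin_pos hn hinj) 2
  have h := sMin_sq_mul_enorm2_le_gram G ((Gᵀ * G)⁻¹ *ᵥ w)
  rw [Matrix.mulVec_mulVec, Matrix.mul_nonsing_inv _ ((Matrix.isUnit_iff_isUnit_det _).mp hG),
    Matrix.one_mulVec] at h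
  rwa [le_div_iff₀ hs, mul_comm]

end EuclideanNorms

theorem stmt_13_general {n d k : ℕ}
    (B Bstar : Matrix (Fin k) (Fin d) ℝ)
    (hB : B * Bᵀ = 1)
    (ε : ℝ) (hε : specNorm (B - Bstar) ≤ ε)
    (vstar : Fin k → ℝ) (X : Matrix (Fin n) (Fin d) ℝ)
    (hinv : IsUnit (B * Xᵀ * X * Bᵀ)) :
    enorm2 (Bstarᵀ.mulVec vstar -
        Bᵀ.mulVec ((B * Xᵀ * X * Bᵀ)⁻¹.mulVec ((B * Xᵀ * X * Bstarᵀ).mulVec vstar))) ≤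
      ε * enorm2 vstar +
        (specNorm X ^ 2 /
            sInf {c | ∃ u : Fin k → ℝ, enorm2 u = 1 ∧ c = enorm2 (X.mulVec (Bᵀ.mulVec u))} ^ 2) *
          ε * enorm2 vstar := by
  have hgram : B * Xᵀ * X * Bᵀ = (X * Bᵀ)ᵀ * (X * Bᵀ) := by
    simp only [Matrix.transpose_mul, Matrix.transpose_transpose, Matrix.mul_assoc]
  have hsMin : sInf {c | ∃ u : Fin k → ℝ, enorm2 u = 1 ∧ c = enorm2 (X *ᵥ (Bᵀ *ᵥ u))} =
      sMin (X * Bᵀ) := by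
    simp only [sMin, Matrix.mulVec_mulVec]
  set z := (B - Bstar)ᵀ *ᵥ vstar
  have hz : enorm2 z ≤ ε * enorm2 vstar := by
    grw [enorm2_mulVec_le, Matrix.l2_opNorm_transpose, ← specNorm_eq_norm, hε]
    exact norm_nonneg _
  have hXXz : enorm2 ((B * Xᵀ * X) *ᵥ z) ≤ specNorm X ^ 2 * enorm2 z := by
    grw [enorm2_mulVec_le, Matrix.l2_opNorm_mul_transpose_mul_le hB, specNorm_eq_norm]
    exact norm_nonneg _
  rw [Matrix.transpose_mulVec_sub_linearProbe_eq _ _ _ hinv, hsMin, hgram]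
  set s := sMin (X * Bᵀ)
  calc _ ≤ enorm2 (Bᵀ *ᵥ (((X * Bᵀ)ᵀ * (X * Bᵀ))⁻¹ *ᵥ ((B * Xᵀ * X) *ᵥ z))) + enorm2 z :=
        enorm2_sub_le _ _
    _ ≤ enorm2 ((B * Xᵀ * X) *ᵥ z) / s ^ 2 + enorm2 z := by
        grw [enorm2_transpose_mulVec_le hB, enorm2_gram_inv_mulVec_le (hgram ▸ hinv)]
    _ ≤ specNorm X ^ 2 * enorm2 z / s ^ 2 + enorm2 z := by grw [hXXz]
    _ = enorm2 z + specNorm X ^ 2 / s ^ 2 * enorm2 z := by ring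
    _ ≤ ε * enorm2 vstar + specNorm X ^ 2 / s ^ 2 * (ε * enorm2 vstar) := by grw [hz]
    _ = _ := by ring

/-- bound on the OOD-relevant error of the linear-probing solution
`v_lp = (B Xᵀ X Bᵀ)⁻¹ B Xᵀ X B*ᵀ v*`:
`‖B*ᵀ v* − Bᵀ v_lp‖₂ ≤ ε ‖v*‖₂ + (s_max²/s_min²) ε ‖v*‖₂`. -/
theorem stmt_13 {n d k : ℕ} (hnk : k ≤ n)
    (B Bstar : Matrix (Fin k) (Fin d) ℝ)
    (hB : B * Bᵀ = 1) (hBs : Bstar * Bstarᵀ = 1)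
    (ε : ℝ) (hε : specNorm (B - Bstar) ≤ ε)
    (vstar : Fin k → ℝ) (X : Matrix (Fin n) (Fin d) ℝ)
    (hinv : IsUnit (B * Xᵀ * X * Bᵀ)) :
    enorm2 (Bstarᵀ.mulVec vstar -
        Bᵀ.mulVec ((B * Xᵀ * X * Bᵀ)⁻¹.mulVec ((B * Xᵀ * X * Bstarᵀ).mulVec vstar))) ≤
      ε * enorm2 vstar +
        (specNorm X ^ 2 /
            sInf {c | ∃ u : Fin k → ℝ, enorm2 u = 1 ∧ c = enorm2 (X.mulVec (Bᵀ.mulVec u))} ^ 2) *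
          ε * enorm2 vstar :=
  stmt_13_general B Bstar hB ε hε vstar X hinv

end
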